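/- Let $1<t<\infty$, $\sigma>0$, $k\in\mathbb{Z}$, and let $\Psi\in\mathcal{S}(\mathbb{R}^d)$ be a Schwartz function with $\Psi_k:=2^{kd}\Psi(2^k\cdot)$. Suppose $f$ is a tempered distribution with $f=\Psi_k * f$ (as functions). Then for all $x,y\in\mathbb{R}^d$, $\frac{|f(x-y)|}{(1+2^k|y|)^{\sigma}}\le \mathfrak{M}_{\sigma,2^k}^{t}f(x)\cdot 2^{-kd/t}\Big(\int_{\mathbb{R}^d}\big(|\Psi_k(z)|(1+2^k|z|)^{\sigma}\big)^{t'}dz\Big)^{1/t'}$, where $1/t+1/t'=1$; in particular $\mathfrak{M}_{\sigma,2^k}f(x)\le C_{\Psi,\sigma,t,d}\,\mathfrak{M}_{\sigma,2^k}^{t}f(x)$ with constant independent of $k$, $f$, and $x$. -/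

import Mathlib

/-!
Write `W(y) = (1 + 2^k|y|)^σ`. Peetre's inequality `W(y + z) ≤ W(y) W(z)` turns the reproducing
formula `f(x - y) = ∫ Ψ_k(z) f(x - y - z) dz` into
`|f(x - y)| / W(y) ≤ ∫ (|f(x - (y + z))| / W(y + z)) (|Ψ_k(z)| W(z)) dz`,
and Hölder's inequality with exponents `t, t'` bounds this by the `L^t` norm of `|f(x - ·)| / W`,
which is `𝔐^t_{σ,2^k} f(x)` up to the factor `2^{kd/t}`, times the `L^{t'}` norm of `|Ψ_k| W`.
The substitution `w = 2^k z` shows that this last norm equals `2^{kd/t}` times the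
`L^{t'}` norm of `|Ψ(w)| (1 + |w|)^σ`, which is finite because `Ψ` decays faster than any power.
-/

open MeasureTheory ENNReal

noncomputable section

abbrev Euc (d : ℕ) := EuclideanSpace ℝ (Fin d)

/-- Peetre's maximal function `𝔐_{σ,a} f(x) = sup_y |f(x-y)|/(1+a|y|)^σ`. -/
noncomputable def pM (d : ℕ) (σ a : ℝ) (f : Euc d → ℂ) (x : Euc d) : ℝ≥0∞ :=
  ⨆ y : Euc d, (‖f (x - y)‖₊ : ℝ≥0∞) / ENNReal.ofReal ((1 + a * ‖y‖) ^ σ)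

/-- The integral variant `𝔐_{σ,a}^t`. -/
noncomputable def pMT (d : ℕ) (σ a t : ℝ) (f : Euc d → ℂ) (x : Euc d) : ℝ≥0∞ :=
  ENNReal.ofReal (a ^ ((d:ℝ)/t)) *
    (∫⁻ y, (‖f (x - y)‖₊ : ℝ≥0∞) ^ t / ENNReal.ofReal ((1 + a * ‖y‖) ^ (σ * t))) ^ (1/t)

/-- `Ψ_k = 2^{kd} Ψ(2^k ·)`. -/
noncomputable def psiK (d : ℕ) (Ψ : SchwartzMap (Euc d) ℂ) (k : ℤ) (y : Euc d) : ℂ :=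
  (((2:ℝ) ^ ((k:ℝ) * d) : ℝ) : ℂ) * Ψ ((2:ℝ)^k • y)

theorem one_add_mul_norm_add_rpow_le {E : Type*} [SeminormedAddCommGroup E] {a σ : ℝ}
    (ha : 0 ≤ a) (hσ : 0 ≤ σ) (y z : E) :
    (1 + a * ‖y + z‖) ^ σ ≤ (1 + a * ‖y‖) ^ σ * (1 + a * ‖z‖) ^ σ := by
  rw [← Real.mul_rpow (by positivity) (by positivity)]
  gcongr
  nlinarith [norm_add_le y z,
    mul_nonneg (mul_nonneg ha (norm_nonneg y)) (mul_nonneg ha (norm_nonneg z))]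

theorem MeasureTheory.Measure.lintegral_comp_smul {E : Type*} [NormedAddCommGroup E]
    [NormedSpace ℝ E] [MeasurableSpace E] [BorelSpace E] [FiniteDimensional ℝ E]
    (μ : Measure E) [μ.IsAddHaarMeasure] (G : E → ℝ≥0∞) {r : ℝ} (hr : r ≠ 0) :
    ∫⁻ z, G (r • z) ∂μ = ENNReal.ofReal |(r ^ Module.finrank ℝ E)⁻¹| * ∫⁻ w, G w ∂μ := by
  have h := lintegral_map_equiv G (MeasurableEquiv.smul₀ r hr : E ≃ᵐ E) (μ := μ)
  rw [MeasurableEquiv.coe_smul₀, Measure.map_addHaar_smul μ hr] at h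
  rw [← h, lintegral_smul_measure, smul_eq_mul]

theorem SchwartzMap.lintegral_norm_mul_one_add_norm_rpow_lt_top {E F : Type*}
    [NormedAddCommGroup E] [NormedSpace ℝ E] [FiniteDimensional ℝ E] [MeasurableSpace E]
    [BorelSpace E] (μ : Measure E) [μ.IsAddHaarMeasure] [NormedAddCommGroup F] [NormedSpace ℝ F]
    (Ψ : SchwartzMap E F) (σ : ℝ) {q : ℝ} (hq : 0 < q) :
    ∫⁻ w, ENNReal.ofReal ((‖Ψ w‖ * (1 + ‖w‖) ^ σ) ^ q) ∂μ < ∞ := by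
  obtain ⟨N, hN⟩ := exists_nat_gt ((Module.finrank ℝ E : ℝ) / q + σ)
  obtain ⟨M, hM⟩ : ∃ M, ∀ w, (1 + ‖w‖) ^ N * ‖Ψ w‖ ≤ M :=
    ⟨_, fun w => by
      simpa using one_add_le_sup_seminorm_apply (𝕜 := ℝ) (m := (N, 0)) le_rfl le_rfl Ψ w⟩
  have hM0 : 0 ≤ M := (by positivity : (0:ℝ) ≤ (1 + ‖(0:E)‖) ^ N * ‖Ψ 0‖).trans (hM 0)
  have hdecay : ∀ w : E,
      (‖Ψ w‖ * (1 + ‖w‖) ^ σ) ^ q ≤ M ^ q * (1 + ‖w‖) ^ (-((N - σ) * q)) := by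
    intro w
    have hw : 0 < 1 + ‖w‖ := by positivity
    have : ‖Ψ w‖ * (1 + ‖w‖) ^ σ = (1 + ‖w‖) ^ N * ‖Ψ w‖ * (1 + ‖w‖) ^ (σ - N) := by
      rw [Real.rpow_sub hw, Real.rpow_natCast]; field_simp
    rw [this, neg_mul_eq_neg_mul, neg_sub, Real.rpow_mul hw.le,
      ← Real.mul_rpow hM0 (by positivity)]
    gcongr
    exact hM w
  have hr : (Module.finrank ℝ E : ℝ) < (N - σ) * q := (div_lt_iff₀ hq).1 (by linarith)
  calc ∫⁻ w, ENNReal.ofReal ((‖Ψ w‖ * (1 + ‖w‖) ^ σ) ^ q) ∂μ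
      ≤ ∫⁻ w, ENNReal.ofReal (M ^ q) * ENNReal.ofReal ((1 + ‖w‖) ^ (-((N - σ) * q))) ∂μ := by
        gcongr with w
        rw [← ENNReal.ofReal_mul (by positivity)]
        exact ENNReal.ofReal_le_ofReal (hdecay w)
    _ < ∞ := by
        rw [lintegral_const_mul' _ _ ofReal_ne_top]
        exact mul_lt_top ofReal_lt_top (finite_integral_one_add_norm hr)

theorem ENNReal.lintegral_le_Lp_mul_Lq_of_le_mul {α : Type*} [MeasurableSpace α] (μ : Measure α)
    {p q : ℝ} (hpq : p.HolderConjugate q) {h u c : α → ℝ≥0∞} (hh : AEMeasurable h μ)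
    (hc : AEMeasurable c μ) (hc_top : ∀ a, c a ≠ ∞) (hle : ∀ a, h a ≤ u a * c a) :
    ∫⁻ a, h a ∂μ ≤ (∫⁻ a, u a ^ p ∂μ) ^ (1 / p) * (∫⁻ a, c a ^ q ∂μ) ^ (1 / q) := by
  -- `u` need not be measurable; Hölder is applied to the measurable `h / c ≤ u` instead.
  have hle' : ∀ a, h a ≤ (h a / c a) * c a := fun a => by
    rcases eq_or_ne (c a) 0 with hc0 | hc0
    · simpa [hc0] using hle a
    · rw [ENNReal.div_mul_cancel hc0 (hc_top a)]
  calc ∫⁻ a, h a ∂μ ≤ ∫⁻ a, ((h / c) * c) a ∂μ := lintegral_mono hle'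
    _ ≤ (∫⁻ a, (h / c) a ^ p ∂μ) ^ (1 / p) * (∫⁻ a, c a ^ q ∂μ) ^ (1 / q) :=
        ENNReal.lintegral_mul_le_Lp_mul_Lq μ hpq (hh.div hc) hc
    _ ≤ _ := by
        gcongr ?_ ^ _ * _
        · exact one_div_nonneg.2 hpq.nonneg
        · exact lintegral_mono fun a =>
            ENNReal.rpow_le_rpow (ENNReal.div_le_of_le_mul (hle a)) hpq.nonneg

section Convolution

variable {E 𝕜 F : Type*} [NormedAddCommGroup E] [MeasurableSpace E] [BorelSpace E]
  {μ : Measure E} [μ.IsAddLeftInvariant] [NormedField 𝕜] [NormedAddCommGroup F]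
  [NormedSpace ℝ F] [NormedSpace 𝕜 F]

theorem enorm_div_le_of_eq_integral_smul {φ : E → 𝕜} {f : E → F}
    (hφ : AEStronglyMeasurable φ μ) {a σ p q : ℝ} (ha : 0 ≤ a) (hσ : 0 ≤ σ)
    (hpq : p.HolderConjugate q) (x y : E)
    (hf : f (x - y) = ∫ z, φ z • f (x - y - z) ∂μ) :
    ‖f (x - y)‖ₑ / ENNReal.ofReal ((1 + a * ‖y‖) ^ σ) ≤
      (∫⁻ w, ‖f (x - w)‖ₑ ^ p / ENNReal.ofReal ((1 + a * ‖w‖) ^ (σ * p)) ∂μ) ^ (1 / p) *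
        (∫⁻ z, ENNReal.ofReal ((‖φ z‖ * (1 + a * ‖z‖) ^ σ) ^ q) ∂μ) ^ (1 / q) := by
  set W : E → ℝ≥0∞ := fun w => ENNReal.ofReal ((1 + a * ‖w‖) ^ σ)
  have hW0 : ∀ w, W w ≠ 0 := fun w => by simp only [W]; positivity
  have hWm : Measurable W := by fun_prop
  set g : E → F := fun z => φ z • f (x - y - z)
  by_cases hg : Integrable g μ
  swap
  · simp [hf, integral_undef hg]
  have hpointwise : ∀ z, ‖g z‖ₑ / W y ≤
      ‖f (x - (y + z))‖ₑ / W (y + z) * (‖φ z‖ₑ * W z) := fun z => by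
    refine ENNReal.div_le_of_le_mul ?_
    have hpeetre : W (y + z) ≤ W y * W z := by
      simp only [W]
      rw [← ENNReal.ofReal_mul (by positivity)]
      exact ENNReal.ofReal_le_ofReal (one_add_mul_norm_add_rpow_le ha hσ y z)
    calc ‖g z‖ₑ = ‖φ z‖ₑ * (‖f (x - (y + z))‖ₑ / W (y + z) * W (y + z)) := by
          rw [ENNReal.div_mul_cancel (hW0 _) ofReal_ne_top, enorm_smul, sub_sub]
      _ ≤ ‖φ z‖ₑ * (‖f (x - (y + z))‖ₑ / W (y + z) * (W y * W z)) := by gcongr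
      _ = _ := by ring
  have hu : ∀ z, (‖f (x - (y + z))‖ₑ / W (y + z)) ^ p =
      ‖f (x - (y + z))‖ₑ ^ p / ENNReal.ofReal ((1 + a * ‖y + z‖) ^ (σ * p)) := fun z => by
    rw [ENNReal.div_rpow_of_nonneg _ _ hpq.nonneg,
      ENNReal.ofReal_rpow_of_nonneg (by positivity) hpq.nonneg, ← Real.rpow_mul (by positivity)]
  have hc : ∀ z, (‖φ z‖ₑ * W z) ^ q = ENNReal.ofReal ((‖φ z‖ * (1 + a * ‖z‖) ^ σ) ^ q) :=
    fun z => by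
      rw [← ENNReal.ofReal_rpow_of_nonneg (by positivity) hpq.symm.nonneg,
        ENNReal.ofReal_mul (norm_nonneg _), ofReal_norm]
  have hholder := ENNReal.lintegral_le_Lp_mul_Lq_of_le_mul μ hpq (c := fun z => ‖φ z‖ₑ * W z)
    (hg.aestronglyMeasurable.enorm.div_const (W y)) (hφ.enorm.mul hWm.aemeasurable)
    (fun z => mul_ne_top enorm_ne_top ofReal_ne_top) hpointwise
  simp_rw [hu, hc, lintegral_add_left_eq_self
    (fun w => ‖f (x - w)‖ₑ ^ p / ENNReal.ofReal ((1 + a * ‖w‖) ^ (σ * p))) y] at hholder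
  calc ‖f (x - y)‖ₑ / W y ≤ (∫⁻ z, ‖g z‖ₑ ∂μ) / W y := by
        gcongr
        rw [hf]
        exact enorm_integral_le_lintegral_enorm g
    _ = ∫⁻ z, ‖g z‖ₑ / W y ∂μ := by
        simp_rw [div_eq_mul_inv]
        rw [lintegral_mul_const' _ _ (ENNReal.inv_ne_top.2 (hW0 y))]
    _ ≤ _ := hholder

end Convolution

theorem ofReal_two_rpow (s : ℝ) : ENNReal.ofReal ((2:ℝ) ^ s) = 2 ^ s := by
  rw [← ENNReal.ofReal_rpow_of_pos two_pos, ENNReal.ofReal_ofNat]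

theorem lintegral_psiK_weight (d : ℕ) (Ψ : SchwartzMap (Euc d) ℂ) (k : ℤ) (σ q : ℝ) :
    ∫⁻ z, ENNReal.ofReal ((‖psiK d Ψ k z‖ * (1 + (2:ℝ)^k * ‖z‖) ^ σ) ^ q) =
      (2:ℝ≥0∞) ^ ((k:ℝ) * d * (q - 1)) *
        ∫⁻ w, ENNReal.ofReal ((‖Ψ w‖ * (1 + ‖w‖) ^ σ) ^ q) := by
  have ha : (0:ℝ) < 2 ^ k := zpow_pos two_pos k
  set G : Euc d → ℝ≥0∞ :=
    fun w => ENNReal.ofReal (((2:ℝ) ^ ((k:ℝ) * d) * (‖Ψ w‖ * (1 + ‖w‖) ^ σ)) ^ q)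
  have hG : ∀ z, ENNReal.ofReal ((‖psiK d Ψ k z‖ * (1 + (2:ℝ)^k * ‖z‖) ^ σ) ^ q) =
      G ((2:ℝ)^k • z) := fun z => by
    simp only [G, psiK, norm_mul, Complex.norm_real, norm_smul, Real.norm_of_nonneg ha.le,
      Real.norm_of_nonneg (Real.rpow_nonneg zero_le_two _), mul_assoc]
  have hdet :
      ENNReal.ofReal |(((2:ℝ) ^ k) ^ Module.finrank ℝ (Euc d))⁻¹| = 2 ^ (-((k:ℝ) * d)) := by
    rw [finrank_euclideanSpace_fin, ← ofReal_two_rpow, Real.rpow_neg zero_le_two,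
      abs_of_pos (by positivity), Real.rpow_mul zero_le_two, Real.rpow_intCast, Real.rpow_natCast]
  have hscale : ∀ w : Euc d,
      G w = 2 ^ ((k:ℝ) * d * q) * ENNReal.ofReal ((‖Ψ w‖ * (1 + ‖w‖) ^ σ) ^ q) := fun w => by
    simp only [G]
    rw [Real.mul_rpow (x := (2:ℝ) ^ ((k:ℝ) * d)) (by positivity) (by positivity),
      ENNReal.ofReal_mul (by positivity), ← Real.rpow_mul zero_le_two, ofReal_two_rpow]
  simp_rw [hG, Measure.lintegral_comp_smul volume G ha.ne', hdet, hscale]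
  rw [lintegral_const_mul' _ _ (by simp), ← mul_assoc,
    ← ENNReal.rpow_add _ _ two_ne_zero ofNat_ne_top]
  ring_nf

theorem two_rpow_mul_lintegral_psiK_weight_rpow (d : ℕ) (Ψ : SchwartzMap (Euc d) ℂ) (k : ℤ)
    {σ t q : ℝ} (hq : 0 < q) (htq : 1 / t + 1 / q = 1) :
    ENNReal.ofReal ((2:ℝ) ^ (-((k:ℝ) * d) / t)) *
      (∫⁻ z, ENNReal.ofReal ((‖psiK d Ψ k z‖ * (1 + (2:ℝ)^k * ‖z‖) ^ σ) ^ q)) ^ (1 / q) =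
    (∫⁻ w, ENNReal.ofReal ((‖Ψ w‖ * (1 + ‖w‖) ^ σ) ^ q)) ^ (1 / q) := by
  have hexp : -((k:ℝ) * d) / t + (k:ℝ) * d * (q - 1) * (1 / q) = 0 := by
    rw [neg_div, div_eq_mul_one_div _ t, show 1 / t = 1 - 1 / q by linarith]
    field_simp
    ring
  rw [lintegral_psiK_weight, ENNReal.mul_rpow_of_nonneg _ _ (by positivity), ← ENNReal.rpow_mul,
    ofReal_two_rpow, ← mul_assoc, ← ENNReal.rpow_add _ _ two_ne_zero ofNat_ne_top, hexp,
    ENNReal.rpow_zero, one_mul]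

theorem continuous_psiK (d : ℕ) (Ψ : SchwartzMap (Euc d) ℂ) (k : ℤ) : Continuous (psiK d Ψ k) :=
  continuous_const.mul (Ψ.continuous.comp (continuous_const_smul _))

theorem enorm_div_le_pMT_mul (d : ℕ) {σ t t' : ℝ} (hσ : 0 ≤ σ) (hpq : t.HolderConjugate t')
    (Ψ : SchwartzMap (Euc d) ℂ) (k : ℤ) (f : Euc d → ℂ)
    (hf : ∀ x, f x = ∫ y, psiK d Ψ k y * f (x - y)) (x y : Euc d) :
    (‖f (x - y)‖₊ : ℝ≥0∞) / ENNReal.ofReal ((1 + (2:ℝ)^k * ‖y‖) ^ σ) ≤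
      pMT d σ ((2:ℝ)^k) t f x * ENNReal.ofReal ((2:ℝ) ^ (-((k:ℝ) * d) / t)) *
        (∫⁻ z, ENNReal.ofReal
          ((‖psiK d Ψ k z‖ * (1 + (2:ℝ)^k * ‖z‖) ^ σ) ^ t')) ^ (1/t') := by
  have hnormalize : ENNReal.ofReal (((2:ℝ) ^ k) ^ ((d:ℝ) / t)) *
      ENNReal.ofReal ((2:ℝ) ^ (-((k:ℝ) * d) / t)) = 1 := by
    rw [← Real.rpow_intCast, ← Real.rpow_mul zero_le_two, ofReal_two_rpow, ofReal_two_rpow,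
      ← ENNReal.rpow_add _ _ two_ne_zero ofNat_ne_top, mul_div_assoc', neg_div, add_neg_cancel,
      ENNReal.rpow_zero]
  rw [pMT, mul_right_comm (ENNReal.ofReal _) _ (ENNReal.ofReal _), hnormalize, one_mul]
  exact enorm_div_le_of_eq_integral_smul (continuous_psiK d Ψ k).aestronglyMeasurable
    (zpow_nonneg zero_le_two k) hσ hpq x y (by simpa only [smul_eq_mul] using hf (x - y))

theorem stmt8_general (d : ℕ) (σ t t' : ℝ) (ht : 1 < t) (hσ : 0 < σ)
    (ht' : 1/t + 1/t' = 1) (Ψ : SchwartzMap (Euc d) ℂ) :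
    (∀ (k : ℤ) (f : Euc d → ℂ), (∀ x, f x = ∫ y, psiK d Ψ k y * f (x - y)) →
      ∀ x y : Euc d,
        (‖f (x - y)‖₊ : ℝ≥0∞) / ENNReal.ofReal ((1 + (2:ℝ)^k * ‖y‖) ^ σ) ≤
          pMT d σ ((2:ℝ)^k) t f x * ENNReal.ofReal ((2:ℝ) ^ (-((k:ℝ) * d) / t)) *
            (∫⁻ z, ENNReal.ofReal
              ((‖psiK d Ψ k z‖ * (1 + (2:ℝ)^k * ‖z‖) ^ σ) ^ t')) ^ (1/t')) ∧
    ∃ C : ℝ≥0∞, C ≠ ∞ ∧ ∀ (k : ℤ) (f : Euc d → ℂ),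
      (∀ x, f x = ∫ y, psiK d Ψ k y * f (x - y)) →
      ∀ x : Euc d, pM d σ ((2:ℝ)^k) f x ≤ C * pMT d σ ((2:ℝ)^k) t f x := by
  have hpq : t.HolderConjugate t' :=
    Real.holderConjugate_iff.2 ⟨ht, by simpa only [one_div] using ht'⟩
  refine ⟨enorm_div_le_pMT_mul d hσ.le hpq Ψ,
    (∫⁻ w, ENNReal.ofReal ((‖Ψ w‖ * (1 + ‖w‖) ^ σ) ^ t')) ^ (1 / t'),
    rpow_ne_top_of_nonneg (one_div_nonneg.2 hpq.symm.nonneg)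
      (Ψ.lintegral_norm_mul_one_add_norm_rpow_lt_top volume σ hpq.symm.pos).ne,
    fun k f hf x => iSup_le fun y => ?_⟩
  calc _ ≤ _ := enorm_div_le_pMT_mul d hσ.le hpq Ψ k f hf x y
    _ = _ := by
      rw [mul_assoc, two_rpow_mul_lintegral_psiK_weight_rpow d Ψ k hpq.symm.pos ht', mul_comm]

theorem stmt8 (d : ℕ) (hd : 0 < d) (σ t t' : ℝ) (ht : 1 < t) (hσ : 0 < σ)
    (ht' : 1/t + 1/t' = 1) (Ψ : SchwartzMap (Euc d) ℂ) :
    (∀ (k : ℤ) (f : Euc d → ℂ), (∀ x, f x = ∫ y, psiK d Ψ k y * f (x - y)) →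
      ∀ x y : Euc d,
        (‖f (x - y)‖₊ : ℝ≥0∞) / ENNReal.ofReal ((1 + (2:ℝ)^k * ‖y‖) ^ σ) ≤
          pMT d σ ((2:ℝ)^k) t f x * ENNReal.ofReal ((2:ℝ) ^ (-((k:ℝ) * d) / t)) *
            (∫⁻ z, ENNReal.ofReal
              ((‖psiK d Ψ k z‖ * (1 + (2:ℝ)^k * ‖z‖) ^ σ) ^ t')) ^ (1/t')) ∧
    ∃ C : ℝ≥0∞, C ≠ ∞ ∧ ∀ (k : ℤ) (f : Euc d → ℂ),
      (∀ x, f x = ∫ y, psiK d Ψ k y * f (x - y)) →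
      ∀ x : Euc d, pM d σ ((2:ℝ)^k) f x ≤ C * pMT d σ ((2:ℝ)^k) t f x :=
  stmt8_general d σ t t' ht hσ ht' Ψ
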